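/- Let d ≥ 1, let ρ : ℝ^d → ℝ be twice continuously differentiable with ρ(x) > 0 for all x and with finite Fisher information I(ρ) := ∫_{ℝ^d} ‖∇(log ∘ ρ)(x)‖² ρ(x) dx < ∞, and let h : ℝ^d → ℝ be twice continuously differentiable with compact support. Then there exists δ > 0 such that ρ + τh > 0 for all |τ| < δ, and the function τ ↦ I(ρ + τh) is differentiable at τ = 0 with derivative ∫_{ℝ^d} ( −2 Δ(log ∘ ρ)(x) − ‖∇(log ∘ ρ)(x)‖² ) h(x) dx. -/

import Mathlib

/-!
Since `h` has compact support and `ρ` is positive and continuous, `|h| ≤ C ρ` for some `C`, so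
`ρ + τ h > 0` for `|τ| < 1 / (|C| + 1)`. As `∇ log f = f⁻¹ ∇f`, the integrand of `I(ρ + τ h)` is
`‖∇ρ + τ ∇h‖² / (ρ + τ h)`. Its `τ`-derivative vanishes off the support of `h` and is jointly
continuous, hence bounded on that compact set, so we may differentiate under the integral sign.
At `τ = 0` the derivative is `2 ⟪∇ log ρ, ∇h⟫ - ‖∇ log ρ‖² h`, and Green's identity
`∫ ⟪∇ log ρ, ∇h⟫ = -∫ Δ(log ρ) h`, obtained by integrating by parts in each coordinate,
turns its integral into the first variation.
-/

open MeasureTheory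
open scoped RealInnerProductSpace BigOperators

/-- Gradient of a scalar function on Euclidean space. -/
noncomputable def egrad {d : ℕ} (f : EuclideanSpace ℝ (Fin d) → ℝ)
    (x : EuclideanSpace ℝ (Fin d)) : EuclideanSpace ℝ (Fin d) :=
  gradient f x

/-- Laplacian `Δf = ∑ i, ∂²f/∂x_i²`. -/
noncomputable def elap {d : ℕ} (f : EuclideanSpace ℝ (Fin d) → ℝ)
    (x : EuclideanSpace ℝ (Fin d)) : ℝ :=
  ∑ i, fderiv ℝ (fun y => fderiv ℝ f y (EuclideanSpace.single i (1 : ℝ))) x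
      (EuclideanSpace.single i (1 : ℝ))

/-- Divergence `∇·V = ∑ i, ∂V_i/∂x_i` of a vector field. -/
noncomputable def ediv {d : ℕ} (V : EuclideanSpace ℝ (Fin d) → EuclideanSpace ℝ (Fin d))
    (x : EuclideanSpace ℝ (Fin d)) : ℝ :=
  ∑ i, fderiv ℝ (fun y => V y i) x (EuclideanSpace.single i (1 : ℝ))

open Set Filter InnerProductSpace

section Gradient

variable {F : Type*} [NormedAddCommGroup F] [InnerProductSpace ℝ F] [CompleteSpace F]
  {f g : F → ℝ} {x : F}

lemma gradient_log_comp (hf : DifferentiableAt ℝ f x) (hx : f x ≠ 0) :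
    gradient (fun y => Real.log (f y)) x = (f x)⁻¹ • gradient f x := by
  have hlog : HasFDerivAt (fun y => Real.log (f y)) ((f x)⁻¹ • fderiv ℝ f x) x :=
    (Real.hasDerivAt_log hx).comp_hasFDerivAt x hf.hasFDerivAt
  simp only [gradient, hlog.fderiv, map_smulₛₗ, starRingEnd_apply, star_trivial]

lemma gradient_add_const_mul (hf : DifferentiableAt ℝ f x) (hg : DifferentiableAt ℝ g x)
    (c : ℝ) : gradient (fun y => f y + c * g y) x = gradient f x + c • gradient g x := by
  simp only [gradient, fderiv_fun_add hf (hg.const_mul c), fderiv_const_mul hg, map_add,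
    map_smulₛₗ, starRingEnd_apply, star_trivial]

lemma norm_gradient_log_sq_mul (hf : DifferentiableAt ℝ f x) (hx : 0 < f x) :
    ‖gradient (fun y => Real.log (f y)) x‖ ^ 2 * f x = ‖gradient f x‖ ^ 2 / f x := by
  rw [gradient_log_comp hf hx.ne', norm_smul, norm_inv, Real.norm_of_nonneg hx.le]
  field_simp

lemma ContDiff.continuous_gradient (hf : ContDiff ℝ 1 f) : Continuous (gradient f) :=
  (toDual ℝ F).symm.continuous.comp (hf.continuous_fderiv one_ne_zero)

lemma HasCompactSupport.gradient (hf : HasCompactSupport f) :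
    HasCompactSupport (_root_.gradient f) :=
  hf.fderiv (𝕜 := ℝ) |>.comp_left (g := fun L => (toDual ℝ F).symm L) (map_zero _)

end Gradient

lemma exists_pos_forall_abs_lt_add_mul_pos {X : Type*} [TopologicalSpace X] {ρ h : X → ℝ}
    (hρ : Continuous ρ) (hρpos : ∀ x, 0 < ρ x) (hh : Continuous h) (hhs : HasCompactSupport h) :
    ∃ δ > 0, ∀ τ : ℝ, |τ| < δ → ∀ x, 0 < ρ x + τ * h x := by
  obtain ⟨C, hC⟩ : BddAbove (range fun x => |h x| * (ρ x)⁻¹) :=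
    (hh.abs.mul (hρ.inv₀ fun x => (hρpos x).ne')).bddAbove_range_of_hasCompactSupport
      hhs.abs.mul_right
  refine ⟨1 / (|C| + 1), by positivity, fun τ hτ x => ?_⟩
  have hhx : |h x| ≤ |C| * ρ x :=
    (mul_inv_le_iff₀ (hρpos x)).1 ((hC ⟨x, rfl⟩).trans (le_abs_self C))
  have hτC : |τ| * |C| < 1 := by
    have := (lt_div_iff₀ (by positivity)).1 hτ
    linarith [abs_nonneg τ]
  have : |τ * h x| < ρ x :=
    calc |τ * h x| = |τ| * |h x| := abs_mul _ _
      _ ≤ |τ| * |C| * ρ x := by rw [mul_assoc]; gcongr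
      _ < ρ x := mul_lt_of_lt_one_left (hρpos x) hτC
  linarith [neg_abs_le (τ * h x)]

lemma hasDerivAt_integral_of_continuousOn_deriv_of_isCompact {X : Type*} [TopologicalSpace X]
    [T2Space X] [MeasurableSpace X] [OpensMeasurableSpace X] {μ : Measure X}
    [IsFiniteMeasureOnCompacts μ] {F F' : ℝ → X → ℝ} {K : Set X} (hK : IsCompact K)
    {ε : ℝ} (hε : 0 < ε) (hF_meas : ∀ τ ∈ Metric.ball 0 ε, AEStronglyMeasurable (F τ) μ)
    (hF_int : Integrable (F 0) μ)
    (hF' : ContinuousOn (Function.uncurry F') (Metric.ball 0 ε ×ˢ univ))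
    (hF'_supp : ∀ τ ∈ Metric.ball 0 ε, ∀ x ∉ K, F' τ x = 0)
    (hF'_deriv : ∀ x, ∀ τ ∈ Metric.ball 0 ε, HasDerivAt (F · x) (F' τ x) τ) :
    HasDerivAt (fun τ => ∫ x, F τ x ∂μ) (∫ x, F' 0 x ∂μ) 0 := by
  have hsub : Metric.closedBall (0 : ℝ) (ε / 2) ⊆ Metric.ball 0 ε :=
    Metric.closedBall_subset_ball (half_lt_self hε)
  obtain ⟨D, hD⟩ := ((isCompact_closedBall 0 (ε / 2)).prod hK).exists_bound_of_continuousOn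
    (hF'.mono (prod_mono hsub (subset_univ K)))
  have hF'0 : Continuous (F' 0) :=
    hF'.comp_continuous (continuous_const.prodMk continuous_id) fun x =>
      ⟨Metric.mem_ball_self hε, mem_univ x⟩
  have h_bound : ∀ᵐ x ∂μ, ∀ τ ∈ Metric.ball (0 : ℝ) (ε / 2),
      ‖F' τ x‖ ≤ K.indicator (fun _ => D) x := by
    refine ae_of_all _ fun x τ hτ => ?_
    by_cases hx : x ∈ K
    · rw [indicator_of_mem hx]
      exact hD (τ, x) ⟨Metric.ball_subset_closedBall hτ, hx⟩
    · rw [indicator_of_notMem hx, norm_le_zero_iff]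
      exact hF'_supp τ (Metric.ball_subset_ball (half_le_self hε.le) hτ) x hx
  exact (hasDerivAt_integral_of_dominated_loc_of_deriv_le (Metric.ball_mem_nhds 0 (half_pos hε))
    (eventually_of_mem (Metric.ball_mem_nhds 0 hε) hF_meas) hF_int hF'0.aestronglyMeasurable
    h_bound ((integrable_indicator_iff hK.isClosed.measurableSet).2
      (integrableOn_const hK.measure_lt_top.ne))
    (ae_of_all _ fun x τ hτ => hF'_deriv x τ
      (Metric.ball_subset_ball (half_le_self hε.le) hτ))).2

section Perturbation

variable {E : Type*} [NormedAddCommGroup E] [InnerProductSpace ℝ E]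

lemma hasDerivAt_norm_add_smul_sq_div (a b : E) {r s τ : ℝ} (hτ : r + τ * s ≠ 0) :
    HasDerivAt (fun σ : ℝ => ‖a + σ • b‖ ^ 2 / (r + σ * s))
      ((2 * ⟪a + τ • b, b⟫ * (r + τ * s) - ‖a + τ • b‖ ^ 2 * s) / (r + τ * s) ^ 2) τ := by
  have hline : HasDerivAt (fun σ : ℝ => a + σ • b) b τ := by
    simpa using ((hasDerivAt_id τ).smul_const b).const_add a
  have hnorm : HasDerivAt (fun σ : ℝ => ‖a + σ • b‖ ^ 2) (2 * ⟪a + τ • b, b⟫) τ := by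
    simpa only [real_inner_self_eq_norm_sq, real_inner_comm b, two_mul] using hline.inner ℝ hline
  have hden : HasDerivAt (fun σ : ℝ => r + σ * s) s τ := by
    simpa using ((hasDerivAt_id τ).mul_const s).const_add r
  exact hnorm.div hden hτ

variable {X : Type*} [TopologicalSpace X] [T2Space X] [MeasurableSpace X] [OpensMeasurableSpace X]
  {μ : Measure X} [IsFiniteMeasureOnCompacts μ]

theorem hasDerivAt_integral_norm_add_smul_sq_div {a b : X → E} {r s : X → ℝ}
    (ha : Continuous a) (hb : Continuous b) (hr : Continuous r) (hs : Continuous s)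
    (hbs : HasCompactSupport b) (hss : HasCompactSupport s) {δ : ℝ} (hδ : 0 < δ)
    (hne : ∀ τ, |τ| < δ → ∀ x, r x + τ * s x ≠ 0)
    (hint : Integrable (fun x => ‖a x‖ ^ 2 / r x) μ) :
    HasDerivAt (fun τ => ∫ x, ‖a x + τ • b x‖ ^ 2 / (r x + τ * s x) ∂μ)
      (∫ x, (2 * ⟪a x, b x⟫ * r x - ‖a x‖ ^ 2 * s x) / r x ^ 2 ∂μ) 0 := by
  have hne' : ∀ τ ∈ Metric.ball (0 : ℝ) δ, ∀ x, r x + τ * s x ≠ 0 := fun τ hτ =>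
    hne τ (by simpa using hτ)
  have key := hasDerivAt_integral_of_continuousOn_deriv_of_isCompact (μ := μ)
    (F := fun τ x => ‖a x + τ • b x‖ ^ 2 / (r x + τ * s x))
    (F' := fun τ x => (2 * ⟪a x + τ • b x, b x⟫ * (r x + τ * s x) - ‖a x + τ • b x‖ ^ 2 * s x) /
      (r x + τ * s x) ^ 2)
    (hbs.union hss) hδ
    (fun τ hτ => ((ha.add (continuous_const.smul hb)).norm.pow 2 |>.div
      (hr.add (continuous_const.mul hs)) (hne' τ hτ)).aestronglyMeasurable)
    (by simpa only [zero_smul, add_zero, zero_mul] using hint)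
    (ContinuousOn.div (by fun_prop) (by fun_prop)
      fun p hp => pow_ne_zero 2 (hne' p.1 hp.1 p.2))
    (fun τ _ x hx => by
      rw [mem_union, not_or] at hx
      simp [image_eq_zero_of_notMem_tsupport hx.1, image_eq_zero_of_notMem_tsupport hx.2])
    (fun x τ hτ => hasDerivAt_norm_add_smul_sq_div (a x) (b x) (hne' τ hτ x))
  simpa only [zero_smul, add_zero, zero_mul] using key

end Perturbation

section PartialDerivatives

variable {E : Type*} [NormedAddCommGroup E] [NormedSpace ℝ E] [MeasurableSpace E]
  [OpensMeasurableSpace E] {μ : Measure E} {f g : E → ℝ}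

lemma integrable_fderiv_apply_mul [IsFiniteMeasureOnCompacts μ] (hf : ContDiff ℝ 1 f)
    (hg : Continuous g) (hgs : HasCompactSupport g) (v : E) :
    Integrable (fun x => fderiv ℝ f x v * g x) μ :=
  (((hf.continuous_fderiv one_ne_zero).clm_apply continuous_const).mul
    hg).integrable_of_hasCompactSupport hgs.mul_left

lemma integrable_fderiv_apply_mul_fderiv_apply [IsFiniteMeasureOnCompacts μ]
    (hf : ContDiff ℝ 1 f) (hg : ContDiff ℝ 1 g) (hgs : HasCompactSupport g) (v : E) :
    Integrable (fun x => fderiv ℝ f x v * fderiv ℝ g x v) μ :=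
  integrable_fderiv_apply_mul hf ((hg.continuous_fderiv one_ne_zero).clm_apply continuous_const)
    (hgs.fderiv_apply (𝕜 := ℝ) v) v

lemma integral_fderiv_apply_mul_fderiv_apply [FiniteDimensional ℝ E] [BorelSpace E]
    [μ.IsAddHaarMeasure] (hf : ContDiff ℝ 2 f) (hg : ContDiff ℝ 1 g)
    (hgs : HasCompactSupport g) (v : E) :
    ∫ x, fderiv ℝ f x v * fderiv ℝ g x v ∂μ =
      -∫ x, fderiv ℝ (fun y => fderiv ℝ f y v) x v * g x ∂μ := by
  have hfv : ContDiff ℝ 1 fun y => fderiv ℝ f y v :=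
    (hf.fderiv_right (m := 1) le_rfl).clm_apply contDiff_const
  exact integral_mul_fderiv_eq_neg_fderiv_mul_of_integrable
    (integrable_fderiv_apply_mul hfv hg.continuous hgs v)
    (integrable_fderiv_apply_mul_fderiv_apply (hf.of_le one_le_two) hg hgs v)
    ((hfv.continuous.mul hg.continuous).integrable_of_hasCompactSupport hgs.mul_left)
    (fun x _ => hfv.differentiable one_ne_zero x) (fun x _ => hg.differentiable one_ne_zero x)

end PartialDerivatives

section Euclidean

variable {d : ℕ}

lemma egrad_apply (f : EuclideanSpace ℝ (Fin d) → ℝ) (x : EuclideanSpace ℝ (Fin d)) (i : Fin d) :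
    egrad f x i = fderiv ℝ f x (EuclideanSpace.single i 1) := by
  have h := inner_gradient_left (f := f) (x := x) (y := EuclideanSpace.single i (1 : ℝ))
  rwa [EuclideanSpace.inner_single_right, conj_trivial, one_mul] at h

lemma inner_egrad_eq_sum (f g : EuclideanSpace ℝ (Fin d) → ℝ) (x : EuclideanSpace ℝ (Fin d)) :
    ⟪egrad f x, egrad g x⟫ = ∑ i, fderiv ℝ f x (EuclideanSpace.single i 1) *
      fderiv ℝ g x (EuclideanSpace.single i 1) := by
  simp only [PiLp.inner_apply, RCLike.inner_apply, conj_trivial, egrad_apply, mul_comm]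

theorem integral_inner_egrad_eq_neg_integral_elap_mul {f g : EuclideanSpace ℝ (Fin d) → ℝ}
    (hf : ContDiff ℝ 2 f) (hg : ContDiff ℝ 1 g) (hgs : HasCompactSupport g) :
    ∫ x, ⟪egrad f x, egrad g x⟫ = -∫ x, elap f x * g x := by
  have hfv : ∀ v, ContDiff ℝ 1 fun y => fderiv ℝ f y v := fun v =>
    (hf.fderiv_right (m := 1) le_rfl).clm_apply contDiff_const
  simp only [inner_egrad_eq_sum, elap, Finset.sum_mul]
  rw [integral_finsetSum _ fun i _ =>
      integrable_fderiv_apply_mul_fderiv_apply (hf.of_le one_le_two) hg hgs _,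
    integral_finsetSum _ fun i _ => integrable_fderiv_apply_mul (hfv _) hg.continuous hgs _,
    ← Finset.sum_neg_distrib]
  exact Finset.sum_congr rfl fun i _ => integral_fderiv_apply_mul_fderiv_apply hf hg hgs _

lemma ContDiff.continuous_elap {f : EuclideanSpace ℝ (Fin d) → ℝ} (hf : ContDiff ℝ 2 f) :
    Continuous (elap f) :=
  continuous_finsetSum _ fun _ _ =>
    (((hf.fderiv_right (m := 1) le_rfl).clm_apply contDiff_const).continuous_fderiv
      one_ne_zero).clm_apply continuous_const

theorem integral_two_inner_egrad_sub_eq_integral_elap_mul {f g : EuclideanSpace ℝ (Fin d) → ℝ}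
    (hf : ContDiff ℝ 2 f) (hg : ContDiff ℝ 1 g) (hgs : HasCompactSupport g) :
    ∫ x, (2 * ⟪egrad f x, egrad g x⟫ - ‖egrad f x‖ ^ 2 * g x) =
      ∫ x, (-2 * elap f x - ‖egrad f x‖ ^ 2) * g x := by
  have hgradf : Continuous (egrad f) := (hf.of_le one_le_two).continuous_gradient
  have hsq : Integrable fun x => ‖egrad f x‖ ^ 2 * g x :=
    (hgradf.norm.pow 2 |>.mul hg.continuous).integrable_of_hasCompactSupport hgs.mul_left
  have hinner : Integrable fun x => ⟪egrad f x, egrad g x⟫ :=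
    (hgradf.inner hg.continuous_gradient).integrable_of_hasCompactSupport
      (hgs.gradient.mono (Function.support_subset_iff'.2 fun x hx => by
        simp [egrad, Function.notMem_support.1 hx]))
  have hlap : Integrable fun x => -2 * (elap f x * g x) :=
    ((hf.continuous_elap.mul hg.continuous).integrable_of_hasCompactSupport
      hgs.mul_left).const_mul _
  simp only [sub_mul, mul_assoc]
  rw [integral_sub (hinner.const_mul 2) hsq, integral_sub hlap hsq, integral_const_mul,
    integral_const_mul, integral_inner_egrad_eq_neg_integral_elap_mul hf hg hgs]
  ring

end Euclidean

theorem fisher_information_first_variation_general {d : ℕ}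
    (ρ : EuclideanSpace ℝ (Fin d) → ℝ)
    (hρ : ContDiff ℝ 2 ρ) (hρpos : ∀ x, 0 < ρ x)
    (hI : Integrable (fun x => ‖egrad (fun y => Real.log (ρ y)) x‖ ^ 2 * ρ x))
    (h : EuclideanSpace ℝ (Fin d) → ℝ)
    (hh : ContDiff ℝ 2 h) (hhsupp : HasCompactSupport h) :
    ∃ δ > 0,
      (∀ τ : ℝ, |τ| < δ → ∀ x, 0 < ρ x + τ * h x) ∧
      HasDerivAt
        (fun τ : ℝ =>
          ∫ x, ‖egrad (fun y => Real.log (ρ y + τ * h y)) x‖ ^ 2 * (ρ x + τ * h x))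
        (∫ x, (-2 * elap (fun y => Real.log (ρ y)) x
                - ‖egrad (fun y => Real.log (ρ y)) x‖ ^ 2) * h x)
        0 := by
  have hρd : Differentiable ℝ ρ := hρ.differentiable two_ne_zero
  have hhd : Differentiable ℝ h := hh.differentiable two_ne_zero
  obtain ⟨δ, hδ, hpos⟩ :=
    exists_pos_forall_abs_lt_add_mul_pos hρ.continuous hρpos hh.continuous hhsupp
  refine ⟨δ, hδ, hpos, ?_⟩
  have hintegrand : ∀ τ, |τ| < δ → ∀ x,
      ‖egrad (fun y => Real.log (ρ y + τ * h y)) x‖ ^ 2 * (ρ x + τ * h x) =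
        ‖gradient ρ x + τ • gradient h x‖ ^ 2 / (ρ x + τ * h x) := fun τ hτ x => by
    rw [egrad, norm_gradient_log_sq_mul (f := fun y => ρ y + τ * h y)
      ((hρd x).add ((hhd x).const_mul τ)) (hpos τ hτ x), gradient_add_const_mul (hρd x) (hhd x)]
  have hvariation : ∀ x,
      (2 * ⟪gradient ρ x, gradient h x⟫ * ρ x - ‖gradient ρ x‖ ^ 2 * h x) / ρ x ^ 2 =
        2 * ⟪egrad (fun y => Real.log (ρ y)) x, egrad h x⟫ -
          ‖egrad (fun y => Real.log (ρ y)) x‖ ^ 2 * h x := fun x => by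
    rw [egrad, egrad, gradient_log_comp (hρd x) (hρpos x).ne', real_inner_smul_left, norm_smul,
      norm_inv, Real.norm_of_nonneg (hρpos x).le]
    field_simp
  have hderiv := hasDerivAt_integral_norm_add_smul_sq_div (μ := volume)
    (hρ.of_le one_le_two).continuous_gradient (hh.of_le one_le_two).continuous_gradient
    hρ.continuous hh.continuous hhsupp.gradient hhsupp hδ (fun τ hτ x => (hpos τ hτ x).ne')
    (hI.congr (ae_of_all _ fun x => by simpa using hintegrand 0 (by simpa) x))
  rw [integral_congr_ae (ae_of_all _ hvariation),
    integral_two_inner_egrad_sub_eq_integral_elap_mul (hρ.log fun x => (hρpos x).ne')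
      (hh.of_le one_le_two) hhsupp] at hderiv
  refine hderiv.congr_of_eventuallyEq (eventually_of_mem (Metric.ball_mem_nhds 0 hδ) ?_)
  exact fun τ hτ => integral_congr_ae (ae_of_all _ (hintegrand τ (by simpa using hτ)))

/-- first variation of the Fisher information
`I(ρ) = ∫ ‖∇ log ρ‖² ρ` is `-2Δ(log ρ) - ‖∇ log ρ‖²`. -/
theorem fisher_information_first_variation {d : ℕ} (hd : 1 ≤ d)
    (ρ : EuclideanSpace ℝ (Fin d) → ℝ)
    (hρ : ContDiff ℝ 2 ρ) (hρpos : ∀ x, 0 < ρ x)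
    (hI : Integrable (fun x => ‖egrad (fun y => Real.log (ρ y)) x‖ ^ 2 * ρ x))
    (h : EuclideanSpace ℝ (Fin d) → ℝ)
    (hh : ContDiff ℝ 2 h) (hhsupp : HasCompactSupport h) :
    ∃ δ > 0,
      (∀ τ : ℝ, |τ| < δ → ∀ x, 0 < ρ x + τ * h x) ∧
      HasDerivAt
        (fun τ : ℝ =>
          ∫ x, ‖egrad (fun y => Real.log (ρ y + τ * h y)) x‖ ^ 2 * (ρ x + τ * h x))
        (∫ x, (-2 * elap (fun y => Real.log (ρ y)) x
                - ‖egrad (fun y => Real.log (ρ y)) x‖ ^ 2) * h x)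
        0 :=
  fisher_information_first_variation_general ρ hρ hρpos hI h hh hhsupp
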